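/- In the proof of the approximation theorem, the relation R = { (s', t') : (∀ i ∈ ℕ, s' ~i t') ∧ t →* t' } is a bisimulation, under the assumption that every state reachable from t is image-finite. -/
import Mathlib


/-- A bisimulation on a labelled transition system `tr`. -/
def IsBisim {S Act : Type*} (tr : S → Act → S → Prop) (R : S → S → Prop) : Prop :=
  ∀ s t, R s t →
    (∀ a s', tr s a s' → ∃ t', tr t a t' ∧ R s' t') ∧
    (∀ a t', tr t a t' → ∃ s', tr s a s' ∧ R s' t')

/-- Bisimilarity: union of all bisimulations. -/
def Bisim {S Act : Type*} (tr : S → Act → S → Prop) (s t : S) : Prop :=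
  ∃ R, IsBisim tr R ∧ R s t

/-- A simulation. -/
def IsSim {S Act : Type*} (tr : S → Act → S → Prop) (R : S → S → Prop) : Prop :=
  ∀ s t, R s t → ∀ a s', tr s a s' → ∃ t', tr t a t' ∧ R s' t'

/-- Simulation preorder. -/
def SimPre {S Act : Type*} (tr : S → Act → S → Prop) (s t : S) : Prop :=
  ∃ R, IsSim tr R ∧ R s t

/-- Stratified bisimilarity: `~0` is total, `~(i+1)` is the one-step refinement of `~i`. -/
def Strat {S Act : Type*} (tr : S → Act → S → Prop) : ℕ → S → S → Prop
  | 0 => fun _ _ => True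
  | i + 1 => fun s t =>
      (∀ a s', tr s a s' → ∃ t', tr t a t' ∧ Strat tr i s' t') ∧
      (∀ a t', tr t a t' → ∃ s', tr s a s' ∧ Strat tr i s' t')

/-- Reachability: reflexive-transitive closure of the one-step transitions (labels ignored). -/
def Reach {S Act : Type*} (tr : S → Act → S → Prop) : S → S → Prop :=
  Relation.ReflTransGen (fun x y => ∃ a, tr x a y)

section ApxAux

variable {S Act : Type*} (tr : S → Act → S → Prop)

lemma strat_succ : ∀ n (s t : S), Strat tr (n + 1) s t → Strat tr n s t
  | 0, _, _, _ => trivial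
  | n + 1, s, t, h =>
    ⟨fun a s' hs => by
        obtain ⟨t', ht, hst⟩ := h.1 a s' hs
        exact ⟨t', ht, strat_succ n _ _ hst⟩,
      fun a t' ht => by
        obtain ⟨s', hs, hst⟩ := h.2 a t' ht
        exact ⟨s', hs, strat_succ n _ _ hst⟩⟩

lemma strat_mono {m n : ℕ} (h : m ≤ n) (s t : S) (hst : Strat tr n s t) :
    Strat tr m s t := by
  induction h with
  | refl => exact hst
  | @step k hk ih => exact ih (strat_succ tr k s t hst)

lemma strat_symm : ∀ n (s t : S), Strat tr n s t → Strat tr n t s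
  | 0, _, _, _ => trivial
  | n + 1, s, t, h =>
    ⟨fun a t' ht => by
        obtain ⟨s', hs, hst⟩ := h.2 a t' ht
        exact ⟨s', hs, strat_symm n _ _ hst⟩,
      fun a s' hs => by
        obtain ⟨t', ht, hst⟩ := h.1 a s' hs
        exact ⟨t', ht, strat_symm n _ _ hst⟩⟩

lemma strat_trans : ∀ n (s t u : S), Strat tr n s t → Strat tr n t u → Strat tr n s u
  | 0, _, _, _, _, _ => trivial
  | n + 1, s, t, u, h1, h2 =>
    ⟨fun a s' hs => by
        obtain ⟨t', ht, hst⟩ := h1.1 a s' hs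
        obtain ⟨u', hu, htu⟩ := h2.1 a t' ht
        exact ⟨u', hu, strat_trans n _ _ _ hst htu⟩,
      fun a u' hu => by
        obtain ⟨t', ht, htu⟩ := h2.2 a u' hu
        obtain ⟨s', hs, hst⟩ := h1.2 a t' ht
        exact ⟨s', hs, strat_trans n _ _ _ hst htu⟩⟩

lemma apx_pigeon {s : Set S} (hf : s.Finite) (g : ℕ → S) (hg : ∀ n, g n ∈ s) :
    ∃ v ∈ s, ∀ m, ∃ n ≥ m, g n = v := by
  haveI := hf.to_subtype
  obtain ⟨v, hv⟩ := Finite.exists_infinite_fiber (fun n => (⟨g n, hg n⟩ : s))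
  refine ⟨v, v.2, fun m => ?_⟩
  obtain ⟨n, hn, hlt⟩ := (Set.infinite_coe_iff.mp hv).exists_gt m
  exact ⟨n, hlt.le, congrArg Subtype.val hn⟩

end ApxAux

theorem approx_relation_isBisim {S Act : Type*} (tr : S → Act → S → Prop) (t : S)
    (hfin : ∀ t', Reach tr t t' → ∀ a : Act, Set.Finite { t'' | tr t' a t'' }) :
    IsBisim tr (fun s' t' => (∀ i : ℕ, Strat tr i s' t') ∧ Reach tr t t') := by
  rintro s t' ⟨hstrat, hreach⟩
  constructor
  · -- forward direction
    intro a s' hs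
    have H : ∀ n : ℕ, ∃ u, tr t' a u ∧ Strat tr n s' u := fun n =>
      (hstrat (n + 1)).1 a s' hs
    choose g hg1 hg2 using H
    obtain ⟨v, hv, hub⟩ := apx_pigeon (hfin t' hreach a) g hg1
    refine ⟨v, hv, fun n => ?_, hreach.tail ⟨a, hv⟩⟩
    obtain ⟨m, hm, he⟩ := hub n
    exact strat_mono tr hm _ _ (he ▸ hg2 m)
  · -- backward direction
    intro a t'' ht
    have H : ∀ n : ℕ, ∃ p, tr s a p ∧ Strat tr n p t'' := fun n =>
      (hstrat (n + 1)).2 a t'' ht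
    choose p hp1 hp2 using H
    -- every `p n` is related at all levels to some fixed a-successor of t'
    have Hw : ∀ n : ℕ, ∃ v, tr t' a v ∧ ∀ m, Strat tr m (p n) v := by
      intro n
      have H2 : ∀ m : ℕ, ∃ u, tr t' a u ∧ Strat tr m (p n) u := fun m =>
        (hstrat (m + 1)).1 a (p n) (hp1 n)
      choose g hg1 hg2 using H2
      obtain ⟨v, hv, hub⟩ := apx_pigeon (hfin t' hreach a) g hg1
      refine ⟨v, hv, fun m => ?_⟩
      obtain ⟨k, hk, he⟩ := hub m
      exact strat_mono tr hk _ _ (he ▸ hg2 k)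
    choose w hw1 hw2 using Hw
    have hwt : ∀ n, Strat tr n (w n) t'' := fun n =>
      strat_trans tr n _ _ _ (strat_symm tr n _ _ (hw2 n n)) (hp2 n)
    obtain ⟨v, hv, hub⟩ := apx_pigeon (hfin t' hreach a) w hw1
    have hvt : ∀ m, Strat tr m v t'' := by
      intro m
      obtain ⟨k, hk, he⟩ := hub m
      exact strat_mono tr hk _ _ (he ▸ hwt k)
    obtain ⟨n0, _, he0⟩ := hub 0
    refine ⟨p n0, hp1 n0, fun m => ?_, hreach.tail ⟨a, ht⟩⟩
    exact strat_trans tr m _ _ _ (he0 ▸ hw2 n0 m) (hvt m)
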